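/- arXiv:0907.2595 — 2 statements merged into one kernel-verified Lean document; each statement's English description precedes it below -/
import Mathlib

section
/- In a cobweb poset Π determined by a sequence F of positive integers (levels Φ_k are antichains of size F_k, and every element of Φ_r is below every element of Φ_s whenever r < s), for any x ∈ Φ_r and y ∈ Φ_s with r < s, the Möbius function satisfies μ(x,y) = (-1)^{s-r} · ∏_{k=r+1}^{s-1} (F_k - 1). -/
/-!
By induction on the rank of `y`, `μ(x, y)` depends only on the ranks `r < s` of `x` and `y`, say
`μ(x, y) = c r s`. Splitting `[x, y)` into `x` and the full levels strictly between, the defining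
recursion becomes `c r s = -(1 + ∑_{r<k<s} F k * c r k)`, and the closed form satisfies it because
moving from `s` to `s + 1` adds `F s * c r s` to `-c r s`, giving `(F s - 1) * c r s = -c r (s + 1)`.
-/

open Finset

section ClosedForm

variable {R : Type*} [CommRing R]

def cobwebMobius (F : ℕ → R) (r s : ℕ) : R :=
  (-1) ^ (s - r) * ∏ k ∈ Ico (r + 1) s, (F k - 1)

lemma cobwebMobius_succ (F : ℕ → R) {r s : ℕ} (h : r < s) :
    cobwebMobius F r (s + 1) = -((F s - 1) * cobwebMobius F r s) := by
  rw [cobwebMobius, cobwebMobius, prod_Ico_succ_top (by omega), Nat.sub_add_comm h.le, pow_succ]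
  ring

lemma one_add_sum_mul_cobwebMobius (F : ℕ → R) {r s : ℕ} (h : r < s) :
    1 + ∑ k ∈ Ioo r s, F k * cobwebMobius F r k = -cobwebMobius F r s := by
  rw [← Ico_add_one_left_eq_Ioo]
  induction s, h using Nat.le_induction with
  | base => simp [cobwebMobius]
  | succ s hs ih =>
    rw [sum_Ico_succ_top (by omega), ← add_assoc, ih, cobwebMobius_succ F hs]
    ring

end ClosedForm

section Levels

variable {α : Type*} [PartialOrder α] [LocallyFiniteOrder α] {lvl : α → ℕ} {Φ : ℕ → Finset α}

lemma Ioo_eq_biUnion_levels [DecidableEq α] (hord : ∀ x y : α, x < y ↔ lvl x < lvl y)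
    (hΦ : ∀ (k : ℕ) (x : α), x ∈ Φ k ↔ lvl x = k) (x y : α) :
    Ioo x y = (Ioo (lvl x) (lvl y)).biUnion Φ := by
  ext z
  simp only [mem_Ioo, mem_biUnion, hΦ, hord, exists_eq_right']

lemma sum_Ioo_eq_sum_levels {M : Type*} [AddCommMonoid M]
    (hord : ∀ x y : α, x < y ↔ lvl x < lvl y) (hΦ : ∀ (k : ℕ) (x : α), x ∈ Φ k ↔ lvl x = k)
    (f : α → M) (x y : α) :
    ∑ z ∈ Ioo x y, f z = ∑ k ∈ Ioo (lvl x) (lvl y), ∑ z ∈ Φ k, f z := by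
  classical
  have hdisj : (Ioo (lvl x) (lvl y) : Set ℕ).PairwiseDisjoint Φ := fun k _ j _ hkj =>
    disjoint_left.2 fun z hzk hzj => hkj (((hΦ k z).1 hzk).symm.trans ((hΦ j z).1 hzj))
  rw [Ioo_eq_biUnion_levels hord hΦ, sum_biUnion hdisj]

end Levels

theorem cobweb_mobius_formula_general {α : Type*} [PartialOrder α] [LocallyFiniteOrder α]
    (F : ℕ → ℕ)
    (lvl : α → ℕ) (Φ : ℕ → Finset α)
    (hord : ∀ x y : α, x < y ↔ lvl x < lvl y)
    (hΦ : ∀ (k : ℕ) (x : α), x ∈ Φ k ↔ lvl x = k)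
    (hcard : ∀ k : ℕ, (Φ k).card = F k)
    (mu : α → α → ℤ)
    (hmu_refl : ∀ x : α, mu x x = 1)
    (hmu_rec : ∀ x y : α, x < y → mu x y = -∑ z ∈ Finset.Ico x y, mu x z)
    (x y : α) (r s : ℕ) (hx : lvl x = r) (hy : lvl y = s) (hrs : r < s) :
    mu x y = (-1 : ℤ) ^ (s - r) * ∏ k ∈ Finset.Ico (r + 1) s, ((F k : ℤ) - 1) := by
  classical
  subst hx hy
  induction hs : lvl y using Nat.strong_induction_on generalizing y with
  | _ s ih =>
    have hxy : x < y := (hord x y).2 (hs ▸ hrs)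
    have hlevel : ∀ k ∈ Ioo (lvl x) s, ∑ z ∈ Φ k, mu x z = F k * cobwebMobius (fun k ↦ (F k : ℤ)) (lvl x) k :=
      fun k hk => by
        rw [mem_Ioo] at hk
        rw [sum_congr rfl fun z hz => ih k hk.2 z (hk.1.trans_eq ((hΦ k z).1 hz).symm)
          ((hΦ k z).1 hz), sum_const, hcard, nsmul_eq_mul]
        rfl
    rw [hmu_rec x y hxy, ← Ioo_insert_left hxy, sum_insert left_notMem_Ioo, hmu_refl,
      sum_Ioo_eq_sum_levels hord hΦ, hs, sum_congr rfl hlevel,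
      one_add_sum_mul_cobwebMobius _ (hs ▸ hrs), neg_neg, cobwebMobius]

/-- In a cobweb poset determined by a positive sequence `F` (levels `Φ k` are
antichains of size `F k`, and `x < y` iff the level of `x` is below the level
of `y`), the Möbius function satisfies
`μ(x,y) = (-1)^(s-r) * ∏_{k=r+1}^{s-1} (F k - 1)` for `x` of rank `r`, `y`
of rank `s`, `r < s`. -/
theorem cobweb_mobius_formula {α : Type*} [PartialOrder α] [LocallyFiniteOrder α]
    (F : ℕ → ℕ) (hF : ∀ k, 0 < F k)
    (lvl : α → ℕ) (Φ : ℕ → Finset α)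
    (hord : ∀ x y : α, x < y ↔ lvl x < lvl y)
    (hΦ : ∀ (k : ℕ) (x : α), x ∈ Φ k ↔ lvl x = k)
    (hcard : ∀ k : ℕ, (Φ k).card = F k)
    (mu : α → α → ℤ)
    (hmu_refl : ∀ x : α, mu x x = 1)
    (hmu_rec : ∀ x y : α, x < y → mu x y = -∑ z ∈ Finset.Ico x y, mu x z)
    (x y : α) (r s : ℕ) (hx : lvl x = r) (hy : lvl y = s) (hrs : r < s) :
    mu x y = (-1 : ℤ) ^ (s - r) * ∏ k ∈ Finset.Ico (r + 1) s, ((F k : ℤ) - 1) :=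
  cobweb_mobius_formula_general F lvl Φ hord hΦ hcard mu hmu_refl hmu_rec x y r s hx hy hrs
end

section
/- Let κ be the cover-relation function of a cobweb poset (κ(x,y) = 1 if y covers x, else 0), and define Max = ∑_{k ≥ 0} κ^{*k} (convolution powers in the incidence algebra over ℤ; the sum is locally finite). Then for x ∈ Φ_r and y ∈ Φ_s with r < s, Max(x,y) = ∏_{i=r+1}^{s-1} F_i, which equals the number of maximal chains from x to y in the interval [x,y]. -/
open Finset

/-- The cover-relation function `κ` of a poset: `κ(x,y) = 1` iff `y` covers `x`. -/
noncomputable def coverFn {α : Type*} [PartialOrder α] (x y : α) : ℤ :=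
  by classical exact if x ⋖ y then 1 else 0

/-- Convolution powers `κ^{*k}` of the cover function in the incidence algebra
over `ℤ`. -/
noncomputable def coverPow {α : Type*} [PartialOrder α] [LocallyFiniteOrder α] :
    ℕ → α → α → ℤ
  | 0, x, y => by classical exact if x = y then 1 else 0
  | (k + 1), x, y => ∑ z ∈ Finset.Icc x y, coverFn x z * coverPow k z y

/-!
Expanding the convolution, `κ^{*k}(x, y)` counts the saturated chains `x = z₀ ⋖ z₁ ⋖ ⋯ ⋖ z_k = y`,
in any locally finite poset. In a cobweb poset `x ⋖ y` exactly when `y` lies one level above `x`,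
so every saturated chain from level `r` to level `s` has `s - r` steps and `Max(x, y)` reduces to
the single term `κ^{*(s-r)}(x, y)`. Its recursion `κ^{*(k+1)}(x, y) = ∑_{x ⋖ z} κ^{*k}(z, y)`
runs over the `F_{r+1}` elements `z` of the next level, which gives the product.
-/

theorem List.IsChain.head_le_of_getLast?_eq {α : Type*} [Preorder α] {z y : α} {t : List α}
    (hc : (z :: t).IsChain (· ⋖ ·)) (hl : (z :: t).getLast? = some y) : z ≤ y := by
  rw [List.getLast?_eq_some_getLast (List.cons_ne_nil z t), Option.some.injEq] at hl
  have := List.relationReflTransGen_of_exists_isChain_cons t (hc.imp fun _ _ h => h.le) hl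
  rwa [Relation.reflTransGen_eq_self] at this

theorem List.IsChain.rank_getLast_add_one {β : Type*} {R : β → β → Prop} (f : β → ℕ)
    (hR : ∀ a b, R a b → f b = f a + 1) {l : List β} {a b : β} (hc : l.IsChain R)
    (ha : l.head? = some a) (hb : l.getLast? = some b) : f b + 1 = f a + l.length := by
  induction l generalizing a with
  | nil => simp at ha
  | cons c t ih =>
    obtain rfl : c = a := by simpa using ha
    rcases t with _ | ⟨d, t⟩
    · obtain rfl : c = b := by simpa using hb
      simp
    · rw [List.isChain_cons_cons] at hc
      rw [List.getLast?_cons_cons] at hb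
      have hstep := hR _ _ hc.1
      have htail := ih hc.2 rfl hb
      simp only [List.length_cons] at htail ⊢
      omega

section SaturatedChains

variable {α : Type*} [PartialOrder α] [LocallyFiniteOrder α]

theorem coverPow_succ_eq_sum_covBy (k : ℕ) (x y : α) [DecidablePred (x ⋖ ·)] :
    coverPow (k + 1) x y = ∑ z ∈ Icc x y with x ⋖ z, coverPow k z y := by
  rw [coverPow, sum_filter]
  refine sum_congr rfl fun z _ => ?_
  by_cases h : x ⋖ z <;> simp [coverFn, h]

open Classical in
noncomputable def saturatedChains : ℕ → α → α → Finset (List α)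
  | 0, x, y => if x = y then {[x]} else ∅
  | k + 1, x, y => {z ∈ Icc x y | x ⋖ z}.biUnion fun z =>
      (saturatedChains k z y).map ⟨List.cons x, List.cons_injective⟩

theorem mem_saturatedChains {k : ℕ} {x y : α} {l : List α} :
    l ∈ saturatedChains k x y ↔
      l.IsChain (· ⋖ ·) ∧ l.head? = some x ∧ l.getLast? = some y ∧ l.length = k + 1 := by
  induction k generalizing x l with
  | zero =>
    by_cases h : x = y <;> rcases l with _ | ⟨a, _ | ⟨b, t⟩⟩ <;> simp [saturatedChains, h]
    rintro rfl
    exact h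
  | succ k ih =>
    simp only [saturatedChains, mem_biUnion, mem_filter, mem_Icc, mem_map, ih]
    constructor
    · rintro ⟨z, ⟨-, hxz⟩, t, ⟨hc, hh, hl, hlen⟩, rfl⟩
      obtain ⟨t, rfl⟩ := List.head?_eq_some_iff.1 hh
      simpa [hxz, hc, hlen] using hl
    · rintro ⟨hc, hh, hl, hlen⟩
      obtain ⟨_ | ⟨z, t⟩, rfl⟩ := List.head?_eq_some_iff.1 hh
      · simp at hlen
      rw [List.isChain_cons_cons] at hc
      rw [List.getLast?_cons_cons] at hl
      exact ⟨z, ⟨⟨hc.1.le, hc.2.head_le_of_getLast?_eq hl⟩, hc.1⟩, z :: t,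
        ⟨hc.2, rfl, hl, by simpa using hlen⟩, rfl⟩

theorem card_saturatedChains (k : ℕ) (x y : α) :
    ((saturatedChains k x y).card : ℤ) = coverPow k x y := by
  classical
  induction k generalizing x with
  | zero => by_cases h : x = y <;> simp [saturatedChains, coverPow, h]
  | succ k ih =>
    rw [coverPow_succ_eq_sum_covBy, saturatedChains, card_biUnion, Nat.cast_sum]
    · simp [ih]
    · intro z₁ _ z₂ _ hne
      simp only [Function.onFun, disjoint_left, mem_map]
      rintro _ ⟨t, ht₁, rfl⟩ ⟨t', ht₂, he⟩
      obtain rfl : t' = t := List.cons_injective he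
      exact hne (Option.some.inj <|
        (mem_saturatedChains.1 ht₁).2.1.symm.trans (mem_saturatedChains.1 ht₂).2.1)

end SaturatedChains

structure IsCobweb {α : Type*} [LT α] (F : ℕ → ℕ) (lvl : α → ℕ) (Φ : ℕ → Finset α) : Prop where
  pos : ∀ k, 0 < F k
  lt_iff : ∀ x y : α, x < y ↔ lvl x < lvl y
  mem_iff : ∀ k x, x ∈ Φ k ↔ lvl x = k
  card_eq : ∀ k, (Φ k).card = F k

namespace IsCobweb

variable {α : Type*} {F : ℕ → ℕ} {lvl : α → ℕ} {Φ : ℕ → Finset α}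

theorem covBy_iff [LT α] (h : IsCobweb F lvl Φ) {x y : α} : x ⋖ y ↔ lvl y = lvl x + 1 := by
  obtain ⟨z, hz⟩ := card_pos.1 ((h.card_eq (lvl x + 1)).symm ▸ h.pos (lvl x + 1))
  have hz : lvl z = lvl x + 1 := (h.mem_iff _ _).1 hz
  constructor
  · intro hxy
    have hlt := (h.lt_iff x y).1 hxy.lt
    by_contra hne
    exact hxy.2 ((h.lt_iff x z).2 (by omega)) ((h.lt_iff z y).2 (by omega))
  · intro hxy
    refine ⟨(h.lt_iff x y).2 (by omega), fun c hxc hcy => ?_⟩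
    have hxc := (h.lt_iff x c).1 hxc
    have hcy := (h.lt_iff c y).1 hcy
    omega

variable [PartialOrder α] [LocallyFiniteOrder α]

theorem coverPow_succ (h : IsCobweb F lvl Φ) (k : ℕ) (x y : α) :
    coverPow (k + 1) x y =
      if lvl y = lvl x + (k + 1) then ∏ i ∈ Ico (lvl x + 1) (lvl y), (F i : ℤ) else 0 := by
  classical
  induction k generalizing x with
  | zero =>
    rw [coverPow_succ_eq_sum_covBy]
    by_cases hxy : lvl y = lvl x + 1
    · simp [coverPow, h.covBy_iff, hxy, ((h.lt_iff x y).2 (by omega)).le]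
    · simp [coverPow, h.covBy_iff, hxy]
  | succ k ih =>
    rw [coverPow_succ_eq_sum_covBy]
    split_ifs with hxy
    · have hcovers : {z ∈ Icc x y | x ⋖ z} = Φ (lvl x + 1) := by
        ext z
        simp only [mem_filter, mem_Icc, h.mem_iff, h.covBy_iff, and_iff_right_iff_imp]
        exact fun hz => ⟨((h.lt_iff x z).2 (by omega)).le, ((h.lt_iff z y).2 (by omega)).le⟩
      have hterm : ∀ z ∈ Φ (lvl x + 1),
          coverPow (k + 1) z y = ∏ i ∈ Ico (lvl x + 2) (lvl y), (F i : ℤ) := by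
        intro z hz
        rw [ih, (h.mem_iff _ _).1 hz, if_pos (by omega)]
      rw [hcovers, sum_congr rfl hterm, sum_const, h.card_eq, nsmul_eq_mul,
        prod_eq_prod_Ico_succ_bot (by omega : lvl x + 1 < lvl y)]
    · refine sum_eq_zero fun z hz => ?_
      have := h.covBy_iff.1 (mem_filter.1 hz).2
      rw [ih, if_neg (by omega)]

theorem tsum_coverPow (h : IsCobweb F lvl Φ) {x y : α} (hxy : lvl x < lvl y) :
    ∑' k, coverPow k x y = coverPow (lvl y - lvl x) x y := by
  refine tsum_eq_single _ fun k hk => ?_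
  rcases k with _ | k
  · have : x ≠ y := by rintro rfl; omega
    simp [coverPow, this]
  · rw [h.coverPow_succ, if_neg (by omega)]

theorem coverPow_sub_eq_prod (h : IsCobweb F lvl Φ) {x y : α} (hxy : lvl x < lvl y) :
    coverPow (lvl y - lvl x) x y = ∏ i ∈ Ico (lvl x + 1) (lvl y), (F i : ℤ) := by
  obtain ⟨k, hk⟩ : ∃ k, lvl y - lvl x = k + 1 := ⟨_, (Nat.succ_pred_eq_of_pos (by omega)).symm⟩
  rw [hk, h.coverPow_succ, if_pos (by omega)]

theorem setOf_isChain_covBy_eq (h : IsCobweb F lvl Φ) (x y : α) :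
    {l : List α | l.IsChain (· ⋖ ·) ∧ l.head? = some x ∧ l.getLast? = some y} =
      ↑(saturatedChains (lvl y - lvl x) x y) := by
  ext l
  simp only [Set.mem_ofPred_eq, mem_coe, mem_saturatedChains]
  refine ⟨fun ⟨hc, hx, hy⟩ => ⟨hc, hx, hy, ?_⟩, fun ⟨hc, hx, hy, _⟩ => ⟨hc, hx, hy⟩⟩
  have hlen := hc.rank_getLast_add_one lvl (fun _ _ => h.covBy_iff.1) hx hy
  obtain ⟨t, rfl⟩ := List.head?_eq_some_iff.1 hx
  simp only [List.length_cons] at hlen ⊢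
  omega

end IsCobweb

/-- In a cobweb poset determined by `F`, the matrix `Max = ∑_{k≥0} κ^{*k}`
satisfies `Max(x,y) = ∏_{i=r+1}^{s-1} F i` for `x` of rank `r` and `y` of rank
`s > r`, and this is the number of maximal (saturated) chains from `x` to `y`. -/
theorem cobweb_max_matrix {α : Type*} [PartialOrder α] [LocallyFiniteOrder α]
    (F : ℕ → ℕ) (hF : ∀ k, 0 < F k)
    (lvl : α → ℕ) (Φ : ℕ → Finset α)
    (hord : ∀ x y : α, x < y ↔ lvl x < lvl y)
    (hΦ : ∀ (k : ℕ) (x : α), x ∈ Φ k ↔ lvl x = k)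
    (hcard : ∀ k : ℕ, (Φ k).card = F k)
    (x y : α) (r s : ℕ) (hx : lvl x = r) (hy : lvl y = s) (hrs : r < s) :
    (∑' k : ℕ, coverPow k x y) = ∏ i ∈ Finset.Ico (r + 1) s, (F i : ℤ) ∧
      (∑' k : ℕ, coverPow k x y) =
        ({l : List α | l.Chain' (· ⋖ ·) ∧ l.head? = some x ∧
          l.getLast? = some y}.ncard : ℤ) := by
  subst hx hy
  have h : IsCobweb F lvl Φ := ⟨hF, hord, hΦ, hcard⟩
  rw [h.tsum_coverPow hrs]
  refine ⟨h.coverPow_sub_eq_prod hrs, ?_⟩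
  rw [← card_saturatedChains, ← Set.ncard_coe_finset, ← h.setOf_isChain_covBy_eq]
  rfl -- `List.Chain'` unfolds to `List.IsChain`
end
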